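/- arXiv:1605.03472 — 2 statements merged into one kernel-verified Lean document; each statement's English description precedes it below -/
import Mathlib

section
/- For all F, G in an algebra of differential functions V, the Fréchet derivatives satisfy X_F(D_G) = [D_F, D_G] + X_G(D_F) + D_{{F,G}}, where {F,G} = X_F(G) − X_G(F). -/
/-- An algebra of differential functions in one variable `u`:
a commutative `ℂ`-algebra with partial derivatives `∂/∂u⁽ⁿ⁾`, a derivation `∂/∂x`,
distinguished elements `u⁽ⁿ⁾`, and the total derivative `∂`. -/
structure DiffAlg (V : Type) [CommRing V] [Algebra ℂ V] where
  pd : ℕ → Derivation ℂ V V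
  dx : Derivation ℂ V V
  u : ℕ → V
  total : Derivation ℂ V V
  pd_comm : ∀ m n f, pd m (pd n f) = pd n (pd m f)
  pd_dx : ∀ n f, pd n (dx f) = dx (pd n f)
  pd_u : ∀ m n, pd m (u n) = if m = n then 1 else 0
  dx_u : ∀ n, dx (u n) = 0
  pdFin : ∀ f, Set.Finite {n | pd n f ≠ 0}
  total_eq : ∀ f, total f = (∑ᶠ n, u (n + 1) * pd n f) + dx f

namespace DiffAlg

variable {V : Type} [CommRing V] [Algebra ℂ V]

/-- The evolutionary vector field `X_F` applied to `f`. -/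
noncomputable def evf (A : DiffAlg V) (F f : V) : V :=
  ∑ᶠ n, (fun x => A.total x)^[n] F * A.pd n f

end DiffAlg

/-- The Fréchet derivative `D_F` applied to `G`: `D_F(G) = Σ_m (∂F/∂u⁽ᵐ⁾) G⁽ᵐ⁾`. -/
noncomputable def DiffAlg.frechApp {V : Type} [CommRing V] [Algebra ℂ V]
    (A : DiffAlg V) (F G : V) : V :=
  ∑ᶠ m, A.pd m F * (fun x => A.total x)^[m] G

/-- Application of the differential operator with coefficients `a` to an element. -/
noncomputable def DiffAlg.opApp {V : Type} [CommRing V] [Algebra ℂ V]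
    (A : DiffAlg V) (a : ℕ → V) (f : V) : V :=
  ∑ᶠ k, a k * (fun x => A.total x)^[k] f

/-- `(D_A)_F` applied to `G`, where `(D_A)_F = Σ_k F⁽ᵏ⁾ D_{a_k}` for `A = Σ_k a_k ∂^k`. -/
noncomputable def DiffAlg.dafApp {V : Type} [CommRing V] [Algebra ℂ V]
    (A : DiffAlg V) (a : ℕ → V) (F G : V) : V :=
  ∑ᶠ k, (fun x => A.total x)^[k] F * DiffAlg.frechApp A (a k) G

/-- `X_F(D_G)` applied to `H`: `Σ_m X_F(∂G/∂u⁽ᵐ⁾) H⁽ᵐ⁾`. -/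
noncomputable def DiffAlg.evfFrech {V : Type} [CommRing V] [Algebra ℂ V]
    (A : DiffAlg V) (F G Hf : V) : V :=
  ∑ᶠ m, DiffAlg.evf A F (A.pd m G) * (fun x => A.total x)^[m] Hf

/-!
Two Leibniz-rule computations drive the proof. The commutation rule
`∂/∂u⁽ᵐ⁾ ∘ ∂ = ∂ ∘ ∂/∂u⁽ᵐ⁾ + ∂/∂u⁽ᵐ⁻¹⁾` gives `D_{∂F} = ∂ ∘ D_F`, hence `D_{F⁽ⁿ⁾} = ∂ⁿ ∘ D_F`.
Differentiating `X_F(G) = Σₙ F⁽ⁿ⁾ ∂G/∂u⁽ⁿ⁾` in `u⁽ᵐ⁾` and using this then gives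
`D_{X_F(G)} = X_F(D_G) + D_G ∘ D_F`; antisymmetrising in `F` and `G` yields the identity.
-/

open Function

section Finsum

variable {α β M : Type*} [AddCommMonoid M]

lemma finsum_nat_eq_zero_add {f : ℕ → M} (hf : HasFiniteSupport f) :
    ∑ᶠ n, f n = f 0 + ∑ᶠ n, f (n + 1) := by
  obtain ⟨N, hN⟩ := hf.toFinset.exists_nat_subset_range
  have hsupp : support f ⊆ Finset.range (N + 1) := fun n hn => by
    have := hN (hf.mem_toFinset.2 hn)
    simp only [Finset.mem_range, Finset.coe_range, Set.mem_Iio] at this ⊢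
    omega
  have hsupp_succ : support (fun n => f (n + 1)) ⊆ Finset.range N := fun n hn => by
    have := hN (hf.mem_toFinset.2 hn)
    simp only [Finset.mem_range, Finset.coe_range, Set.mem_Iio] at this ⊢
    omega
  rw [finsum_eq_sum_of_support_subset _ hsupp, finsum_eq_sum_of_support_subset _ hsupp_succ,
    Finset.sum_range_succ', add_comm]

lemma Function.HasFiniteSupport.finsum_of_uncurry {f : α → β → M}
    (hf : HasFiniteSupport (uncurry f)) :
    HasFiniteSupport fun a => ∑ᶠ b, f a b := by
  refine (hf.image Prod.fst).subset fun a ha => ?_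
  obtain ⟨b, hb⟩ : ∃ b, f a b ≠ 0 := by
    by_contra! h
    exact ha (finsum_eq_zero_of_forall_eq_zero h)
  exact ⟨(a, b), hb, rfl⟩

lemma finsum_comm_of_hasFiniteSupport {f : α → β → M} (hf : HasFiniteSupport (uncurry f)) :
    ∑ᶠ a, ∑ᶠ b, f a b = ∑ᶠ b, ∑ᶠ a, f a b := by
  have hswap : HasFiniteSupport (uncurry fun b a => f a b) :=
    hf.comp_of_injective (Equiv.prodComm β α).injective
  calc ∑ᶠ a, ∑ᶠ b, f a b = ∑ᶠ p : α × β, f p.1 p.2 := (finsum_curry _ hf).symm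
    _ = ∑ᶠ q : β × α, f q.2 q.1 := (finsum_comp_equiv (Equiv.prodComm β α)).symm
    _ = ∑ᶠ b, ∑ᶠ a, f a b := finsum_curry _ hswap

lemma hasFiniteSupport_uncurry_mul {R : Type*} [MulZeroClass R] {c : α → β → R} {g : β → R}
    (hc : ∀ b, HasFiniteSupport (c · b)) (hg : HasFiniteSupport g) :
    HasFiniteSupport (uncurry fun a b => c a b * g b) := by
  refine (hg.biUnion fun b _ => (hc b).prod (Set.finite_singleton b)).subset ?_
  rintro ⟨a, b⟩ hab
  simp only [Set.mem_iUnion]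
  exact ⟨b, right_ne_zero_of_mul hab, left_ne_zero_of_mul hab, rfl⟩

end Finsum

namespace DiffAlg

variable {V : Type} [CommRing V] [Algebra ℂ V] (A : DiffAlg V)

local notation "∂^[" n "]" => (fun x => A.total x)^[n]

@[fun_prop]
lemma hasFiniteSupport_pd (f : V) : HasFiniteSupport fun n => A.pd n f := A.pdFin f

lemma pd_total (m : ℕ) (f : V) :
    A.pd m (A.total f) = A.total (A.pd m f) + ∑ᶠ n, A.pd m (A.u (n + 1)) * A.pd n f := by
  have hleibniz : ∀ n, A.pd m (A.u (n + 1) * A.pd n f)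
      = A.u (n + 1) * A.pd n (A.pd m f) + A.pd m (A.u (n + 1)) * A.pd n f := fun n => by
    rw [Derivation.leibniz, smul_eq_mul, smul_eq_mul, A.pd_comm]
    ring
  rw [A.total_eq, A.total_eq, map_add, map_finsum _ (by fun_prop), finsum_congr hleibniz,
    finsum_add_distrib (by fun_prop) (by fun_prop), A.pd_dx]
  ring

lemma pd_zero_total (f : V) : A.pd 0 (A.total f) = A.total (A.pd 0 f) := by
  simp [pd_total, A.pd_u]

lemma pd_succ_total (m : ℕ) (f : V) :
    A.pd (m + 1) (A.total f) = A.total (A.pd (m + 1) f) + A.pd m f := by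
  rw [pd_total, finsum_eq_single _ m fun n hn => by simp [A.pd_u, hn.symm]]
  simp [A.pd_u]

lemma frechApp_total (F H : V) : A.frechApp (A.total F) H = A.total (A.frechApp F H) := by
  have hleibniz : A.total (A.frechApp F H)
      = ∑ᶠ m, A.total (A.pd m F) * ∂^[m] H + ∑ᶠ m, A.pd m F * ∂^[m + 1] H := by
    rw [frechApp, map_finsum _ (by fun_prop),
      ← finsum_add_distrib (by fun_prop (disch := simp)) (by fun_prop)]
    refine finsum_congr fun m => ?_
    rw [Derivation.leibniz, smul_eq_mul, smul_eq_mul, iterate_succ_apply']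
    ring
  calc A.frechApp (A.total F) H
      = A.pd 0 (A.total F) * H + ∑ᶠ m, A.pd (m + 1) (A.total F) * ∂^[m + 1] H :=
        finsum_nat_eq_zero_add (by fun_prop)
    _ = (A.total (A.pd 0 F) * H + ∑ᶠ m, A.total (A.pd (m + 1) F) * ∂^[m + 1] H)
          + ∑ᶠ m, A.pd m F * ∂^[m + 1] H := by
        simp only [pd_zero_total, pd_succ_total, add_mul]
        rw [finsum_add_distrib (by fun_prop (disch := simp [add_left_injective])) (by fun_prop),
          add_assoc]
    _ = A.total (A.frechApp F H) := by
        rw [hleibniz, finsum_nat_eq_zero_add (f := fun m => A.total (A.pd m F) * ∂^[m] H)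
          (by fun_prop (disch := simp))]
        rfl

lemma frechApp_iterate_total (n : ℕ) (F H : V) :
    A.frechApp (∂^[n] F) H = ∂^[n] (A.frechApp F H) := by
  induction n with
  | zero => rfl
  | succ n ih => rw [iterate_succ_apply', iterate_succ_apply', frechApp_total, ih]

lemma pd_evf (m : ℕ) (F G : V) :
    A.pd m (A.evf F G) = A.evf F (A.pd m G) + ∑ᶠ n, A.pd m (∂^[n] F) * A.pd n G := by
  have hleibniz : ∀ n, A.pd m (∂^[n] F * A.pd n G)
      = ∂^[n] F * A.pd n (A.pd m G) + A.pd m (∂^[n] F) * A.pd n G := fun n => by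
    rw [Derivation.leibniz, smul_eq_mul, smul_eq_mul, A.pd_comm]
    ring
  rw [evf, map_finsum _ (by fun_prop), finsum_congr hleibniz,
    finsum_add_distrib (by fun_prop) (by fun_prop), evf]

lemma frechApp_evf (F G H : V) :
    A.frechApp (A.evf F G) H = A.evfFrech F G H + A.frechApp G (A.frechApp F H) := by
  set b : ℕ → ℕ → V := fun m n => A.pd m (∂^[n] F) * ∂^[m] H * A.pd n G
  have hb : HasFiniteSupport (uncurry b) :=
    hasFiniteSupport_uncurry_mul (fun n => by fun_prop) (by fun_prop)
  have hinner : ∀ n, ∑ᶠ m, b m n = A.pd n G * ∂^[n] (A.frechApp F H) := fun n => by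
    rw [← finsum_mul' _ _ (by fun_prop), ← frechApp, frechApp_iterate_total, mul_comm]
  calc A.frechApp (A.evf F G) H
      = ∑ᶠ m, (A.evf F (A.pd m G) * ∂^[m] H + ∑ᶠ n, b m n) := finsum_congr fun m => by
        rw [pd_evf, add_mul, finsum_mul' _ _ (by fun_prop)]
        refine congrArg _ (finsum_congr fun n => ?_)
        ring
    _ = A.evfFrech F G H + ∑ᶠ n, ∑ᶠ m, b m n := by
        rw [finsum_add_distrib (by fun_prop (disch := simp [evf])) hb.finsum_of_uncurry,
          finsum_comm_of_hasFiniteSupport hb]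
        rfl
    _ = A.evfFrech F G H + A.frechApp G (A.frechApp F H) := by
        simp only [hinner, frechApp]

lemma frechApp_sub (F G H : V) :
    A.frechApp (F - G) H = A.frechApp F H - A.frechApp G H := by
  simp only [frechApp, map_sub, sub_mul]
  exact finsum_sub_distrib (by fun_prop) (by fun_prop)

end DiffAlg

/-- for all `F, G` in `V`,
`X_F(D_G) = [D_F, D_G] + X_G(D_F) + D_{{F,G}}` where `{F,G} = X_F(G) - X_G(F)`
(both sides applied to an arbitrary `H`). -/
theorem evf_of_frechet {V : Type} [CommRing V] [Algebra ℂ V] (A : DiffAlg V)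
    (F G Hf : V) :
    DiffAlg.evfFrech A F G Hf
      = (DiffAlg.frechApp A F (DiffAlg.frechApp A G Hf)
          - DiffAlg.frechApp A G (DiffAlg.frechApp A F Hf))
        + DiffAlg.evfFrech A G F Hf
        + DiffAlg.frechApp A (DiffAlg.evf A F G - DiffAlg.evf A G F) Hf := by
  rw [A.frechApp_sub, A.frechApp_evf, A.frechApp_evf]
  ring
end

section
/- The map φ from V ⊗_C V to the space of non-local operators sending f ⊗ g to f ∂^{-1} g is injective: if f_1,…,f_n and g_1,…,g_n are each linearly independent over the constants C, then Σ_{i=1}^n f_i ∂^{-1} g_i = 0 (as a pseudodifferential operator) forces all terms to vanish. Consequently, the space of weakly non-local operators W_V is isomorphic as a vector space to V[∂] ⊕ (V ⊗_C V). -/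
/-!
Suppose `∑ᵢ hᵢ gᵢ⁽ᵏ⁾ = 0` for all `k`, with the `gᵢ` linearly independent over the
constants. Normalise one coefficient to `1` and differentiate the relations: the derivatives
`hᵢ'` satisfy the same relations with one term fewer, so by induction they vanish. Then the
`hᵢ` are constants and the relation for `k = 0` contradicts independence.

Expanding an element of `K ⊗_C K` as `∑ⱼ Fⱼ ⊗ bⱼ` over a `C`-basis `b` of `K`, this says
that `t` is determined by the coefficients of `φ(t)`. Hence `(E, t) ↦ E(∂) + φ(t)`, read off
on coefficients, is an injective `C`-linear map whose image is exactly the weakly non-local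
operators.
-/

/-- `c : ℤ → K` is the coefficient function of a weakly non-local pseudodifferential
operator `E(∂) + Σ_i p_i ∂⁻¹ q_i` (coefficients bounded above; the negative
coefficients come from `Σ_i p_i ∂⁻¹ q_i`, using
`∂⁻¹ q = Σ_{j ≥ 0} (-1)^j q⁽ʲ⁾ ∂^{-1-j}`). -/
def IsWNL {K : Type} [Field K] (d : K → K) (c : ℤ → K) : Prop :=
  (∃ N : ℤ, ∀ m : ℤ, N < m → c m = 0) ∧
  ∃ (n : ℕ) (p q : Fin n → K), ∀ m : ℤ, m < 0 →
    c m = ∑ i, p i * ((-1 : K) ^ ((-1 - m).toNat) * d^[(-1 - m).toNat] (q i))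

open TensorProduct

def Derivation.ofAddLeibniz {A : Type*} [CommRing A] (d : A → A)
    (hadd : ∀ x y, d (x + y) = d x + d y) (hleib : ∀ x y, d (x * y) = x * d y + d x * y) :
    Derivation ℤ A A :=
  Derivation.mk' (AddMonoidHom.mk' d hadd).toIntLinearMap fun x y => by
    simp [hleib, mul_comm]

theorem LinearMap.exists_equiv_subtype_of_injective {R M N : Type*} [Semiring R]
    [AddCommMonoid M] [AddCommMonoid N] [Module R M] [Module R N] (f : M →ₗ[R] N)
    (hf : Function.Injective f) {P : N → Prop} (hP : ∀ c, P c ↔ c ∈ LinearMap.range f) :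
    ∃ e : {c : N // P c} ≃ M,
      (∀ x y : {c : N // P c}, ∀ hxy : P (x.1 + y.1),
        e ⟨x.1 + y.1, hxy⟩ = e x + e y) ∧
      (∀ (a : R) (x : {c : N // P c}) (hax : P (a • x.1)),
        e ⟨a • x.1, hax⟩ = a • e x) := by
  let g := (LinearEquiv.ofInjective f hf).symm
  refine ⟨(Equiv.subtypeEquivRight hP).trans g.toEquiv, fun x y _ => ?_, fun a x _ => ?_⟩
  · exact g.map_add ⟨x.1, (hP _).1 x.2⟩ ⟨y.1, (hP _).1 y.2⟩
  · exact g.map_smul a ⟨x.1, (hP _).1 x.2⟩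

theorem TensorProduct.exists_fin_sum_tmul {R M N : Type*} [CommSemiring R] [AddCommMonoid M]
    [AddCommMonoid N] [Module R M] [Module R N] (x : M ⊗[R] N) :
    ∃ (n : ℕ) (p : Fin n → M) (q : Fin n → N), x = ∑ i, p i ⊗ₜ q i := by
  obtain ⟨S, rfl⟩ := exists_finset x
  refine ⟨S.card, fun i => (S.equivFin.symm i).1.1, fun i => (S.equivFin.symm i).1.2, ?_⟩
  rw [← Finset.sum_coe_sort, ← S.equivFin.symm.sum_comp]

section LinearIndependence

variable {K ι : Type*} [Field K] {R : Type*} [CommRing R] [Algebra R K]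

theorem LinearIndepOn.eq_zero_of_sum_mul_eq_zero {C : Subfield K} {g : ι → K} {s : Finset ι}
    (hg : LinearIndepOn C g s) {c : ι → K} (hc : ∀ i ∈ s, c i ∈ C)
    (hsum : ∑ i ∈ s, c i * g i = 0) : ∀ i ∈ s, c i = 0 := by
  choose! r hr using fun i hi => (⟨⟨c i, hc i hi⟩, rfl⟩ : ∃ r : C, (r : K) = c i)
  have hr0 := linearIndepOn_finset_iff.1 hg r <| by
    rw [← hsum]
    exact Finset.sum_congr rfl fun i hi => by rw [← hr i hi]; rfl
  intro i hi
  rw [← hr i hi, hr0 i hi, ZeroMemClass.coe_zero]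

theorem linearIndependent_of_forall_sum_mul_eq_zero [Fintype ι] {C : Subfield K}
    {D : Derivation R K K} (hC : ∀ x ∈ C, D x = 0) {g : ι → K}
    (hg : ∀ c : ι → K, (∀ i, D (c i) = 0) → ∑ i, c i * g i = 0 → ∀ i, c i = 0) :
    LinearIndependent C g :=
  Fintype.linearIndependent_iff.2 fun r hr i =>
    Subtype.ext (hg (fun i => r i) (fun i => hC _ (r i).2) hr i)

theorem Derivation.sum_deriv_mul_iterate_eq_zero (D : Derivation R K K) {s : Finset ι}
    {g h : ι → K} (hh : ∀ k, ∑ i ∈ s, h i * D^[k] (g i) = 0) (k : ℕ) :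
    ∑ i ∈ s, D (h i) * D^[k] (g i) = 0 := by
  have hD : D (∑ i ∈ s, h i * D^[k] (g i)) = 0 := by rw [hh k, map_zero]
  have hsucc := hh (k + 1)
  simp only [Function.iterate_succ_apply'] at hsucc
  simpa [map_sum, Derivation.leibniz, Finset.sum_add_distrib, hsucc, mul_comm] using hD

theorem Derivation.eq_zero_of_sum_mul_iterate_eq_zero (D : Derivation R K K) {C : Subfield K}
    (hC : ∀ x, D x = 0 → x ∈ C) {s : Finset ι} {g : ι → K} (hg : LinearIndepOn C g s)
    {h : ι → K} (hh : ∀ k, ∑ i ∈ s, h i * D^[k] (g i) = 0) : ∀ i ∈ s, h i = 0 := by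
  classical
  induction s using Finset.induction_on generalizing h with
  | empty => simp
  | @insert a s ha ih =>
    have hgs : LinearIndepOn C g s := hg.mono (by simp)
    by_cases hha : h a = 0
    · have hhs : ∀ k, ∑ i ∈ s, h i * D^[k] (g i) = 0 := fun k => by
        simpa [Finset.sum_insert ha, hha] using hh k
      simpa [hha] using ih hgs hhs
    exfalso
    set H : ι → K := fun i => h i / h a
    have hH : ∀ k, ∑ i ∈ insert a s, H i * D^[k] (g i) = 0 := fun k => by
      simp only [H, div_eq_inv_mul, mul_assoc, ← Finset.mul_sum, hh k, mul_zero]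
    have hHa : H a = 1 := div_self hha
    have hDH : ∀ i ∈ s, D (H i) = 0 := ih hgs fun k => by
      simpa [Finset.sum_insert ha, hHa] using D.sum_deriv_mul_iterate_eq_zero hH k
    have hconst : ∀ i ∈ insert a s, H i ∈ C := by
      simp only [Finset.forall_mem_insert, hHa, one_mem, true_and]
      exact fun i hi => hC _ (hDH i hi)
    have hHa0 := hg.eq_zero_of_sum_mul_eq_zero hconst (by simpa using hH 0) a
      (Finset.mem_insert_self a s)
    exact one_ne_zero (hHa ▸ hHa0)

theorem Derivation.isEmpty_of_sum_mul_iterate_eq_zero [Fintype ι] (D : Derivation R K K)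
    {C : Subfield K} (hC : ∀ x, x ∈ C ↔ D x = 0) {f g : ι → K} (hf : LinearIndependent C f)
    (hg : LinearIndependent C g) (hfg : ∀ k, ∑ i, f i * D^[k] (g i) = 0) : IsEmpty ι :=
  ⟨fun i => hf.ne_zero i <|
    D.eq_zero_of_sum_mul_iterate_eq_zero (fun x => (hC x).2) (hg.linearIndepOn _) hfg i
      (Finset.mem_univ i)⟩

end LinearIndependence

section TensorProduct

variable {K : Type*} [Field K] {R : Type*} [CommRing R] [Algebra R K]
  (D : Derivation R K K) {C : Subfield K}

def Derivation.linearMapOfConstants (hC : ∀ x ∈ C, D x = 0) : K →ₗ[C] K where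
  toFun := D
  map_add' := D.map_add
  map_smul' c x := by simp [Subfield.smul_def, hC c c.2]

def Derivation.iteratePairing (hC : ∀ x ∈ C, D x = 0) (k : ℕ) : K ⊗[C] K →ₗ[C] K :=
  TensorProduct.lift ((LinearMap.mul C K).compl₂ (D.linearMapOfConstants hC ^ k))

theorem Derivation.iteratePairing_tmul (hC : ∀ x ∈ C, D x = 0) (k : ℕ) (p q : K) :
    D.iteratePairing hC k (p ⊗ₜ q) = p * D^[k] q := by
  show p * (D.linearMapOfConstants hC ^ k) q = _
  rw [Module.End.pow_apply]
  rfl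

theorem Derivation.eq_zero_of_forall_iteratePairing_eq_zero (hC : ∀ x, x ∈ C ↔ D x = 0)
    {t : K ⊗[C] K} (ht : ∀ k, D.iteratePairing (fun x => (hC x).1) k t = 0) : t = 0 := by
  classical
  let b := Module.Basis.ofVectorSpace C K
  obtain ⟨F, rfl⟩ := (TensorProduct.equivFinsuppOfBasisRight (M := K) b).symm.surjective t
  have hF : ∀ j ∈ F.support, F j = 0 :=
    D.eq_zero_of_sum_mul_iterate_eq_zero (fun x => (hC x).2) (b.linearIndependent.linearIndepOn _)
      fun k => by simpa [Finsupp.sum, map_sum, D.iteratePairing_tmul] using ht k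
  have hF0 : F = 0 := Finsupp.ext fun j => by
    by_cases hj : j ∈ F.support
    · exact hF j hj
    · exact Finsupp.notMem_support_iff.1 hj
  rw [hF0, map_zero]

variable (hC : ∀ x, x ∈ C ↔ D x = 0)

/-- The coefficients of `E(∂) + φ(t)`: the one of `∂^k` is `E k`, and the one of `∂^(-1-k)`,
stored at `Int.negSucc k`, is `(-1)^k ∑ pᵢ qᵢ⁽ᵏ⁾` for `t = ∑ pᵢ ⊗ qᵢ`. -/
def Derivation.wnlCoeffs : (ℕ →₀ K) × K ⊗[C] K →ₗ[C] (ℤ → K) where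
  toFun z
    | (k : ℕ) => z.1 k
    | .negSucc k => (-1) ^ k * D.iteratePairing (fun x => (hC x).1) k z.2
  map_add' z w := by ext (_ | k) <;> simp [mul_add]
  map_smul' c z := by
    ext (_ | k)
    · rfl
    · change (-1) ^ k * D.iteratePairing _ k (c • z.2) =
        c • ((-1) ^ k * D.iteratePairing _ k z.2)
      rw [LinearMap.map_smul, Subfield.smul_def, Subfield.smul_def, smul_eq_mul, smul_eq_mul,
        mul_left_comm]

theorem Derivation.wnlCoeffs_natCast (z : (ℕ →₀ K) × K ⊗[C] K) (k : ℕ) :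
    D.wnlCoeffs hC z k = z.1 k := rfl

theorem Derivation.wnlCoeffs_negSucc (z : (ℕ →₀ K) × K ⊗[C] K) (k : ℕ) :
    D.wnlCoeffs hC z (.negSucc k) = (-1) ^ k * D.iteratePairing (fun x => (hC x).1) k z.2 := rfl

theorem Derivation.wnlCoeffs_injective : Function.Injective (D.wnlCoeffs hC) := by
  refine (injective_iff_map_eq_zero _).2 fun z hz => Prod.ext ?_ ?_
  · ext k
    exact congrFun hz k
  · refine D.eq_zero_of_forall_iteratePairing_eq_zero hC fun k => ?_
    have hk := congrFun hz (.negSucc k)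
    rw [wnlCoeffs_negSucc] at hk
    exact (mul_eq_zero.1 hk).resolve_left (pow_ne_zero _ (neg_ne_zero.2 one_ne_zero))

theorem Derivation.neg_one_pow_mul_iteratePairing_sum_tmul {n : ℕ} (p q : Fin n → K) (k : ℕ) :
    (-1) ^ k * D.iteratePairing (fun x => (hC x).1) k (∑ i, p i ⊗ₜ q i) =
      ∑ i, p i * ((-1) ^ k * D^[k] (q i)) := by
  simp only [map_sum, iteratePairing_tmul, Finset.mul_sum]
  exact Finset.sum_congr rfl fun i _ => mul_left_comm _ _ _

end TensorProduct

section WeaklyNonlocal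

variable {K : Type} [Field K] {R : Type*} [CommRing R] [Algebra R K] (D : Derivation R K K)
  {C : Subfield K} (hC : ∀ x, x ∈ C ↔ D x = 0)

theorem Derivation.isWNL_wnlCoeffs (z : (ℕ →₀ K) × K ⊗[C] K) :
    IsWNL D (D.wnlCoeffs hC z) := by
  refine ⟨⟨(z.1.support.sup id : ℕ), fun m hm => ?_⟩, ?_⟩
  · obtain ⟨k, rfl⟩ := Int.eq_ofNat_of_zero_le (by omega : 0 ≤ m)
    rw [wnlCoeffs_natCast, ← Finsupp.notMem_support_iff]
    intro hk
    have : k ≤ z.1.support.sup id := Finset.le_sup (f := id) hk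
    omega
  · obtain ⟨n, p, q, hz⟩ := TensorProduct.exists_fin_sum_tmul z.2
    refine ⟨n, p, q, fun m hm => ?_⟩
    obtain ⟨k, rfl⟩ := Int.eq_negSucc_of_lt_zero hm
    have hk : (-1 - Int.negSucc k).toNat = k := by omega
    rw [hk, wnlCoeffs_negSucc, hz, D.neg_one_pow_mul_iteratePairing_sum_tmul hC]

theorem Derivation.mem_range_wnlCoeffs {c : ℤ → K} (hc : IsWNL D c) :
    c ∈ LinearMap.range (D.wnlCoeffs hC) := by
  classical
  obtain ⟨⟨N, hN⟩, n, p, q, hneg⟩ := hc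
  let E : ℕ →₀ K :=
    Finsupp.onFinset (Finset.range (N.toNat + 1)) (fun k => c k) fun k hk => by
      rw [Finset.mem_range]
      by_contra
      exact hk (hN k (by omega))
  refine ⟨(E, ∑ i, p i ⊗ₜ q i), funext fun m => ?_⟩
  cases m with
  | ofNat k => rfl
  | negSucc k =>
    have hk : (-1 - Int.negSucc k).toNat = k := by omega
    rw [wnlCoeffs_negSucc, D.neg_one_pow_mul_iteratePairing_sum_tmul hC,
      hneg _ (Int.negSucc_lt_zero k), hk]

end WeaklyNonlocal

/-- the map `f ⊗ g ↦ f ∂⁻¹ g` is injective: if `f_1, ..., f_n` and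
`g_1, ..., g_n` are each linearly independent over the constants `C` and
`Σ_i f_i ∂⁻¹ g_i = 0` as a pseudodifferential operator (i.e. `Σ_i f_i g_i⁽ᵏ⁾ = 0`
for all `k ≥ 0`), then all terms vanish (forcing `n = 0`). Consequently the space of
weakly non-local operators is isomorphic, as a `C`-vector space, to
`K[∂] ⊕ (K ⊗_C K)`. -/
theorem wnl_injective_and_decomposition {K : Type} [Field K] (d : K → K)
    (hadd : ∀ x y, d (x + y) = d x + d y)
    (hleib : ∀ x y, d (x * y) = x * d y + d x * y)
    (C : Subfield K) (hC : ∀ x : K, x ∈ C ↔ d x = 0) :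
    (∀ (n : ℕ) (f g : Fin n → K),
      (∀ c : Fin n → K, (∀ i, d (c i) = 0) → ∑ i, c i * f i = 0 → ∀ i, c i = 0) →
      (∀ c : Fin n → K, (∀ i, d (c i) = 0) → ∑ i, c i * g i = 0 → ∀ i, c i = 0) →
      (∀ k : ℕ, ∑ i, f i * d^[k] (g i) = 0) → n = 0) ∧
    ∃ e : {c : ℤ → K // IsWNL d c} ≃ ((ℕ →₀ K) × TensorProduct C K K),
      (∀ x y : {c : ℤ → K // IsWNL d c}, ∀ hxy : IsWNL d (x.1 + y.1),
        e ⟨x.1 + y.1, hxy⟩ = e x + e y) ∧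
      (∀ (a : C) (x : {c : ℤ → K // IsWNL d c}) (hax : IsWNL d (a • x.1)),
        e ⟨a • x.1, hax⟩ = a • e x) := by
  let D := Derivation.ofAddLeibniz d hadd hleib
  have hCD : ∀ x, x ∈ C ↔ D x = 0 := hC
  refine ⟨fun n f g hf hg hfg => ?_, ?_⟩
  · have hempty := D.isEmpty_of_sum_mul_iterate_eq_zero hCD
      (linearIndependent_of_forall_sum_mul_eq_zero (fun x => (hCD x).1) hf)
      (linearIndependent_of_forall_sum_mul_eq_zero (fun x => (hCD x).1) hg) hfg
    exact (Fintype.card_fin n).symm.trans (Fintype.card_eq_zero_iff.2 hempty)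
  · exact (D.wnlCoeffs hCD).exists_equiv_subtype_of_injective (D.wnlCoeffs_injective hCD)
      fun c => ⟨D.mem_range_wnlCoeffs hCD, fun ⟨z, hz⟩ => hz ▸ D.isWNL_wnlCoeffs hCD z⟩
end
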